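/- Let A = ⊕_{i∈ℕ} ℤ/p^{k_i} where p is a prime and (k_i) is a strictly increasing sequence of positive integers. Then the Jacobson radical of End(A) is not closed in the finite topology on End(A). -/

import Mathlib

/-!
Let `σ` be the shift sending the generator `eᵢ` of `ℤ/p^{kᵢ}` to `p^{kᵢ₊₁-kᵢ} eᵢ₊₁`. It is the
limit, in the finite topology, of the truncations `σ ∘ π_N`, where `π_N` kills the summands of
index `≥ N`. Each truncation lies in the Jacobson radical: its image lies in `pA` and is killed by
`p^{k_N}`, so `γ σ π_N` is nilpotent for every `γ`. The shift itself does not: it maps the socle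
generator `sₙ = p^{kₙ-1} eₙ` to `sₙ₊₁`, so a left inverse `τ` of `1 - σ` would satisfy
`τ sₙ = sₙ + τ sₙ₊₁`; as `p^{kₙ-1}` kills the summands of index `< n`, the `j`-th coordinate of
`τ s₀` would be that of `sⱼ`, nonzero for every `j`, which no element of a direct sum allows.
-/

open DirectSum

/-- The finite topology on the endomorphism ring of an abelian group: induced by the
inclusion into `A → A` where `A` carries the discrete topology. -/
def finTopEnd (A : Type*) [AddCommGroup A] : TopologicalSpace (AddMonoid.End A) :=
  TopologicalSpace.induced (fun f => (f : A → A))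
    (@Pi.topologicalSpace A (fun _ => A) (fun _ => ⊥))

open Filter

theorem Ideal.mem_jacobson_bot_of_forall_isNilpotent_mul {R : Type*} [Ring R] {x : R}
    (h : ∀ y, IsNilpotent (y * x)) : x ∈ (⊥ : Ideal R).jacobson := by
  refine Ideal.mem_jacobson_iff.2 fun y => ⟨↑(h y).isUnit_add_one.unit⁻¹, ?_⟩
  rw [Ideal.mem_bot, mul_assoc, ← mul_add_one, IsUnit.val_inv_mul, sub_self]

theorem Ideal.exists_mul_one_sub_eq_one_of_mem_jacobson_bot {R : Type*} [Ring R] {x : R}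
    (hx : x ∈ (⊥ : Ideal R).jacobson) : ∃ z, z * (1 - x) = 1 := by
  obtain ⟨z, hz⟩ := Ideal.exists_mul_add_sub_mem_of_mem_jacobson _ (neg_mem hx)
  rw [Ideal.mem_bot, sub_eq_zero, neg_add_eq_sub] at hz
  exact ⟨z, hz⟩

namespace AddMonoid.End

variable {A : Type*} [AddCommMonoid A]

theorem isNilpotent_mul_of_forall_exists_nsmul {f : AddMonoid.End A} {n m : ℕ}
    (hdiv : ∀ x, ∃ y, f x = n • y) (hkill : ∀ x, n ^ m • f x = 0) (g : AddMonoid.End A) :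
    IsNilpotent (g * f) := by
  have hpow : ∀ j x, ∃ y, ((g * f) ^ j) x = n ^ j • y := by
    intro j
    induction j with
    | zero => exact fun x => ⟨x, by simp⟩
    | succ j ih =>
      intro x
      obtain ⟨y, hy⟩ := ih x
      obtain ⟨z, hz⟩ := hdiv y
      refine ⟨g z, ?_⟩
      simp only [pow_succ', coe_mul, Function.comp_apply, hy, map_nsmul, hz, mul_nsmul]
  refine ⟨m + 1, ?_⟩
  ext x
  obtain ⟨y, hy⟩ := hpow m x
  simp only [pow_succ', coe_mul, Function.comp_apply, hy, map_nsmul, hkill, map_zero,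
    zero_apply]

end AddMonoid.End

namespace ZMod

def mulPowHom (p : ℕ) {m n : ℕ} (h : m ≤ n) : ZMod (p ^ m) →+ ZMod (p ^ n) :=
  ZMod.lift _ ⟨(AddMonoidHom.mulLeft ((p : ZMod (p ^ n)) ^ (n - m))).comp (Int.castAddHom _), by
    simp only [AddMonoidHom.comp_apply, Int.coe_castAddHom, AddMonoidHom.coe_mulLeft]
    push_cast
    rw [← pow_add, Nat.sub_add_cancel h, ← Nat.cast_pow, ZMod.natCast_self]⟩

theorem mulPowHom_intCast (p : ℕ) {m n : ℕ} (h : m ≤ n) (z : ℤ) :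
    mulPowHom p h z = (p : ZMod (p ^ n)) ^ (n - m) * z :=
  ZMod.lift_coe _ _ z

theorem mulPowHom_one (p : ℕ) {m n : ℕ} (h : m ≤ n) :
    mulPowHom p h 1 = (p : ZMod (p ^ n)) ^ (n - m) := by
  simpa using mulPowHom_intCast p h 1

theorem exists_mulPowHom_eq_nsmul (p : ℕ) {m n : ℕ} (h : m < n) (v : ZMod (p ^ m)) :
    ∃ w, mulPowHom p h.le v = p • w := by
  obtain ⟨z, rfl⟩ := ZMod.intCast_surjective v
  refine ⟨(p : ZMod (p ^ n)) ^ (n - m - 1) * z, ?_⟩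
  rw [mulPowHom_intCast, nsmul_eq_mul, ← mul_assoc, ← pow_succ', Nat.sub_one_add_one (by omega)]

theorem pow_nsmul_eq_zero (p : ℕ) {m n : ℕ} (h : m ≤ n) (v : ZMod (p ^ m)) : p ^ n • v = 0 := by
  rw [nsmul_eq_mul, (ZMod.natCast_eq_zero_iff _ _).2 (pow_dvd_pow p h), zero_mul]

theorem natCast_pow_pred_ne_zero {p : ℕ} (hp : 1 < p) {m : ℕ} (hm : 0 < m) :
    ((p ^ (m - 1) : ℕ) : ZMod (p ^ m)) ≠ 0 := by
  rw [Ne, ZMod.natCast_eq_zero_iff, Nat.pow_dvd_pow_iff_le_right hp]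
  omega

end ZMod

namespace DirectSum

variable {β : ℕ → Type*} [∀ i, AddCommMonoid (β i)]

def shiftMap (φ : ∀ i, β i →+ β (i + 1)) : AddMonoid.End (⨁ i, β i) :=
  toAddMonoid fun i => (of β (i + 1)).comp (φ i)

theorem shiftMap_of (φ : ∀ i, β i →+ β (i + 1)) (i : ℕ) (v : β i) :
    shiftMap φ (of β i v) = of β (i + 1) (φ i v) :=
  toAddMonoid_of _ i v

theorem exists_shiftMap_eq_nsmul {φ : ∀ i, β i →+ β (i + 1)} {n : ℕ}
    (h : ∀ i v, ∃ w, φ i v = n • w) (x : ⨁ i, β i) : ∃ y, shiftMap φ x = n • y := by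
  induction x using DirectSum.induction_on with
  | zero => exact ⟨0, by simp⟩
  | of i v =>
    obtain ⟨w, hw⟩ := h i v
    exact ⟨of β (i + 1) w, by rw [shiftMap_of, hw, map_nsmul]⟩
  | add x y hx hy =>
    obtain ⟨x', hx'⟩ := hx
    obtain ⟨y', hy'⟩ := hy
    exact ⟨x' + y', by rw [map_add, hx', hy', smul_add]⟩

variable (β) in
def truncation (N : ℕ) : AddMonoid.End (⨁ i, β i) :=
  DFinsupp.filterAddMonoidHom β (· < N)

theorem truncation_apply (N : ℕ) (x : ⨁ i, β i) (j : ℕ) :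
    truncation β N x j = if j < N then x j else 0 :=
  rfl

theorem eventually_truncation_eq (x : ⨁ i, β i) : ∀ᶠ N in atTop, truncation β N x = x := by
  classical
  obtain ⟨n, hn⟩ := x.support.exists_nat_subset_range
  filter_upwards [eventually_ge_atTop n] with N hN
  ext j
  rw [truncation_apply]
  split_ifs with hj
  · rfl
  · by_contra hx
    have := Finset.mem_range.1 (hn (DFinsupp.mem_support_iff.2 (Ne.symm hx)))
    omega

end DirectSum

theorem tendsto_finTopEnd_iff {A ι : Type*} [AddCommGroup A] {l : Filter ι}
    {f : ι → AddMonoid.End A} {g : AddMonoid.End A} :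
    Tendsto f l (@nhds _ (finTopEnd A) g) ↔ ∀ a, ∀ᶠ i in l, f i a = g a := by
  let _ : TopologicalSpace A := ⊥
  have : DiscreteTopology A := ⟨rfl⟩
  rw [finTopEnd, nhds_induced, tendsto_comap_iff, tendsto_pi_nhds]
  simp only [Function.comp_apply, nhds_discrete, tendsto_pure]

theorem tendsto_mul_truncation {β : ℕ → Type*} [∀ i, AddCommGroup (β i)]
    (g : AddMonoid.End (⨁ i, β i)) :
    Tendsto (fun N => g * truncation β N) atTop (@nhds _ (finTopEnd _) g) :=
  tendsto_finTopEnd_iff.2 fun x => (eventually_truncation_eq x).mono fun N hN => by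
    rw [AddMonoid.End.coe_mul, Function.comp_apply, hN]

section PrimaryShift

variable (p : ℕ) (k : ℕ → ℕ)

def pShift (hk : Monotone k) : AddMonoid.End (⨁ i, ZMod (p ^ k i)) :=
  shiftMap fun i => ZMod.mulPowHom p (hk i.le_succ)

def socleGen (n : ℕ) : ⨁ i, ZMod (p ^ k i) :=
  p ^ (k n - 1) • of (fun i => ZMod (p ^ k i)) n 1

variable {p k}

theorem pow_nsmul_apply_eq_zero {m j : ℕ} (h : k j ≤ m) (x : ⨁ i, ZMod (p ^ k i)) :
    (p ^ m • x) j = 0 :=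
  ZMod.pow_nsmul_eq_zero p h (x j)

theorem pow_nsmul_truncation_eq_zero (hk : Monotone k) (N : ℕ) (x : ⨁ i, ZMod (p ^ k i)) :
    p ^ k N • truncation _ N x = 0 := by
  ext j
  rw [DFinsupp.nsmul_apply, truncation_apply]
  split_ifs with hj
  · exact ZMod.pow_nsmul_eq_zero p (hk hj.le) _
  · exact smul_zero _

theorem pShift_mul_truncation_mem_jacobson (hk : StrictMono k) (N : ℕ) :
    pShift p k hk.monotone * truncation _ N ∈
      (⊥ : Ideal (AddMonoid.End (⨁ i, ZMod (p ^ k i)))).jacobson := by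
  let f : AddMonoid.End (⨁ i, ZMod (p ^ k i)) := pShift p k hk.monotone * truncation _ N
  have hdiv : ∀ x, ∃ y, f x = p • y := fun x =>
    exists_shiftMap_eq_nsmul (fun i => ZMod.exists_mulPowHom_eq_nsmul p (hk i.lt_succ_self)) _
  have hkill : ∀ x, p ^ k N • f x = 0 := fun x => by
    rw [AddMonoid.End.coe_mul, Function.comp_apply, ← map_nsmul,
      pow_nsmul_truncation_eq_zero hk.monotone, map_zero]
  exact Ideal.mem_jacobson_bot_of_forall_isNilpotent_mul
    (AddMonoid.End.isNilpotent_mul_of_forall_exists_nsmul hdiv hkill)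

theorem pShift_socleGen (hk : Monotone k) {n : ℕ} (hn : 0 < k n) :
    pShift p k hk (socleGen p k n) = socleGen p k (n + 1) := by
  have hmul : ZMod.mulPowHom p (hk n.le_succ) 1 = p ^ (k (n + 1) - k n) • 1 := by
    rw [ZMod.mulPowHom_one, nsmul_one, Nat.cast_pow]
  rw [socleGen, socleGen, map_nsmul, pShift, shiftMap_of, hmul, map_nsmul, smul_smul, ← pow_add]
  congr 2
  have : k n ≤ k (n + 1) := hk n.le_succ
  omega

theorem socleGen_apply_self_ne_zero (hp : 1 < p) {n : ℕ} (hn : 0 < k n) :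
    socleGen p k n n ≠ 0 := by
  rw [socleGen, DFinsupp.nsmul_apply, of_eq_same, nsmul_one]
  exact ZMod.natCast_pow_pred_ne_zero hp hn

theorem socleGen_apply_of_ne {n j : ℕ} (h : j ≠ n) : socleGen p k n j = 0 := by
  rw [socleGen, DFinsupp.nsmul_apply, of_eq_of_ne _ _ _ h, smul_zero]

theorem apply_socleGen_apply_eq_zero (hk : StrictMono k)
    (f : AddMonoid.End (⨁ i, ZMod (p ^ k i))) {n j : ℕ} (h : j < n) : f (socleGen p k n) j = 0 := by
  rw [socleGen, map_nsmul]
  exact pow_nsmul_apply_eq_zero (Nat.le_sub_one_of_lt (hk h)) _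

theorem mul_one_sub_pShift_ne_one (hp : 1 < p) (hk : StrictMono k) (hk0 : ∀ i, 0 < k i)
    (τ : AddMonoid.End (⨁ i, ZMod (p ^ k i))) : τ * (1 - pShift p k hk.monotone) ≠ 1 := by
  intro hτ
  have step : ∀ n, τ (socleGen p k n) = socleGen p k n + τ (socleGen p k (n + 1)) := by
    intro n
    have h : τ (socleGen p k n - pShift p k hk.monotone (socleGen p k n)) = socleGen p k n :=
      DFunLike.congr_fun hτ (socleGen p k n)
    rw [pShift_socleGen hk.monotone (hk0 n), map_sub] at h
    exact eq_add_of_sub_eq h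
  have diag : ∀ j i, i ≤ j → τ (socleGen p k 0) j = τ (socleGen p k i) j := by
    intro j i
    induction i with
    | zero => exact fun _ => rfl
    | succ i ih =>
      intro hi
      rw [ih (by omega), step i, DFinsupp.add_apply, socleGen_apply_of_ne (by omega), zero_add]
  have hne : ∀ j, τ (socleGen p k 0) j ≠ 0 := by
    intro j
    rw [diag j j le_rfl, step j, DFinsupp.add_apply,
      apply_socleGen_apply_eq_zero hk τ j.lt_succ_self, add_zero]
    exact socleGen_apply_self_ne_zero hp (hk0 j)
  exact Set.infinite_univ
    ((τ (socleGen p k 0)).support.finite_toSet.subset fun j _ => DFinsupp.mem_support_iff.2 (hne j))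

theorem pShift_not_mem_jacobson (hp : 1 < p) (hk : StrictMono k) (hk0 : ∀ i, 0 < k i) :
    pShift p k hk.monotone ∉ (⊥ : Ideal (AddMonoid.End (⨁ i, ZMod (p ^ k i)))).jacobson :=
  fun h => (Ideal.exists_mul_one_sub_eq_one_of_mem_jacobson_bot h).elim
    fun τ hτ => mul_one_sub_pShift_ne_one hp hk hk0 τ hτ

end PrimaryShift

theorem jacobson_not_closed_of_strictMono (p : ℕ) (hp : p.Prime)
    (k : ℕ → ℕ) (hk : StrictMono k) (hk1 : ∀ i, 0 < k i) :
    ¬ @IsClosed _ (finTopEnd (⨁ i : ℕ, ZMod (p ^ k i)))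
        ((⊥ : Ideal (AddMonoid.End (⨁ i : ℕ, ZMod (p ^ k i)))).jacobson :
          Set (AddMonoid.End (⨁ i : ℕ, ZMod (p ^ k i)))) := by
  let _ := finTopEnd (⨁ i : ℕ, ZMod (p ^ k i))
  exact fun hclosed => pShift_not_mem_jacobson hp.one_lt hk hk1 <|
    hclosed.mem_of_tendsto (tendsto_mul_truncation _)
      (Eventually.of_forall (pShift_mul_truncation_mem_jacobson hk))
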